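/- arXiv:2404.14398 — 4 statements merged into one kernel-verified Lean document; each statement's English description precedes it below -/
import Mathlib

section
/- For each z in {3, 5} (viewed as elements of ZMod 7), the coloring ℓ_z : ℤ × ℤ → ZMod 7 defined by ℓ_z(x, y) = x + z·y (reduced mod 7) is a nice coloring of the triangular lattice graph T: any two distinct vertices of T at graph distance at most 2 receive different values under ℓ_z. -/
/-- The triangular lattice graph on `ℤ × ℤ`: `(a,b)` and `(c,d)` are adjacent iff
`(c − a, d − b) ∈ {(1,0), (−1,0), (0,1), (0,−1), (1,−1), (−1,1)}`. -/
def triLattice : SimpleGraph (ℤ × ℤ) where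
  Adj u v := (v.1 - u.1, v.2 - u.2) ∈
    ({(1, 0), (-1, 0), (0, 1), (0, -1), (1, -1), (-1, 1)} : Set (ℤ × ℤ))
  symm := by
    constructor
    intro u v h
    simp only [Set.mem_insert_iff, Set.mem_singleton_iff, Prod.mk.injEq] at h ⊢
    omega
  loopless := by
    constructor
    intro u h
    simp only [Set.mem_insert_iff, Set.mem_singleton_iff, Prod.mk.injEq] at h
    omega

/-- The linear coloring `ℓ_z : ℤ × ℤ → ZMod 7`, `ℓ_z(x, y) = x + z·y`. -/
def linColoring (z : ZMod 7) (v : ℤ × ℤ) : ZMod 7 :=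
  (v.1 : ZMod 7) + z * (v.2 : ZMod 7)

/-!
For `z = 3` and `z = 5` the additive map `ℓ_z` sends the seven points of the closed unit ball
`B = {0, ±(1,0), ±(0,1), ±(1,-1)}` of the triangular lattice to seven distinct residues mod 7.
If `u` and `v` are at distance at most `2`, there is a vertex `w` with `w - u` and `w - v` in `B`;
then `ℓ_z u = ℓ_z v` gives `ℓ_z (w - u) = ℓ_z (w - v)`, hence `u = v`.
-/

lemma SimpleGraph.Reachable.exists_eq_or_adj_of_dist_le_two {V : Type*} {G : SimpleGraph V}
    {u v : V} (h : G.Reachable u v) (hdist : G.dist u v ≤ 2) :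
    ∃ w, (u = w ∨ G.Adj u w) ∧ (w = v ∨ G.Adj w v) := by
  obtain ⟨p, hp⟩ := h.exists_walk_length_eq_dist
  match p with
  | .nil => exact ⟨u, .inl rfl, .inl rfl⟩
  | .cons huv .nil => exact ⟨v, .inr huv, .inl rfl⟩
  | .cons huw (.cons hwv .nil) => exact ⟨_, .inr huw, .inr hwv⟩
  | .cons _ (.cons _ (.cons _ _)) => simp only [SimpleGraph.Walk.length_cons] at hp; omega

lemma SimpleGraph.reachable_add_zsmul {A : Type*} [AddGroup A] {G : SimpleGraph A} {e : A}
    (h : ∀ x, G.Adj x (x + e)) (x : A) (n : ℤ) : G.Reachable x (x + n • e) := by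
  induction n using Int.induction_on with
  | zero => simp
  | succ n ih =>
    refine ih.trans (SimpleGraph.Adj.reachable ?_)
    simpa [add_zsmul, add_assoc] using h (x + n • e)
  | pred n ih =>
    refine ih.trans (SimpleGraph.Adj.reachable (SimpleGraph.Adj.symm ?_))
    simpa [sub_zsmul, add_assoc] using h (x + (-n - 1 : ℤ) • e)

def triUnitBall : Set (ℤ × ℤ) := {0, (1, 0), (-1, 0), (0, 1), (0, -1), (1, -1), (-1, 1)}

lemma sub_mem_triUnitBall_of_eq_or_adj {u v : ℤ × ℤ} (h : u = v ∨ triLattice.Adj u v) :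
    v - u ∈ triUnitBall := by
  rcases h with rfl | hadj
  · simp [triUnitBall]
  · exact Set.mem_insert_of_mem _ hadj

lemma neg_mem_triUnitBall {d : ℤ × ℤ} (hd : d ∈ triUnitBall) : -d ∈ triUnitBall := by
  simp only [triUnitBall, Set.mem_insert_iff, Set.mem_singleton_iff] at hd
  rcases hd with rfl | rfl | rfl | rfl | rfl | rfl | rfl <;> simp [triUnitBall]

lemma triLattice_connected : triLattice.Connected := by
  have adj_right (x : ℤ × ℤ) : triLattice.Adj x (x + (1, 0)) := by simp [triLattice]
  have adj_up (x : ℤ × ℤ) : triLattice.Adj x (x + (0, 1)) := by simp [triLattice]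
  refine SimpleGraph.connected_iff_exists_forall_reachable _ |>.mpr ⟨0, fun v => ?_⟩
  have hv : 0 + v.1 • (1, 0) + v.2 • (0, 1) = v := by ext <;> simp
  exact hv ▸ (SimpleGraph.reachable_add_zsmul adj_right 0 v.1).trans
    (SimpleGraph.reachable_add_zsmul adj_up _ v.2)

lemma linColoring_sub (z : ZMod 7) (u v : ℤ × ℤ) :
    linColoring z (u - v) = linColoring z u - linColoring z v := by
  simp only [linColoring, Prod.fst_sub, Prod.snd_sub, Int.cast_sub]
  ring

lemma linColoring_injOn_triUnitBall {z : ZMod 7} (hz : z ∈ ({3, 5} : Set (ZMod 7))) :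
    Set.InjOn (linColoring z) triUnitBall := by
  rcases hz with rfl | rfl <;>
  · simp only [Set.InjOn, triUnitBall, Set.mem_insert_iff, Set.mem_singleton_iff]
    rintro d (rfl | rfl | rfl | rfl | rfl | rfl | rfl) e (rfl | rfl | rfl | rfl | rfl | rfl | rfl) <;>
    simp [linColoring] <;> decide

/-- For `z ∈ {3, 5} ⊆ ZMod 7`, the coloring `ℓ_z` is a nice coloring of the
triangular lattice: distinct vertices at graph distance at most 2 get different colors. -/
theorem linColoring_nice (z : ZMod 7) (hz : z ∈ ({3, 5} : Set (ZMod 7)))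
    (u v : ℤ × ℤ) (huv : u ≠ v) (hdist : triLattice.dist u v ≤ 2) :
    linColoring z u ≠ linColoring z v := by
  obtain ⟨w, huw, hwv⟩ :=
    (triLattice_connected.preconnected u v).exists_eq_or_adj_of_dist_le_two hdist
  have hu : w - u ∈ triUnitBall := sub_mem_triUnitBall_of_eq_or_adj huw
  have hv : w - v ∈ triUnitBall := by
    simpa using neg_mem_triUnitBall (sub_mem_triUnitBall_of_eq_or_adj hwv)
  intro heq
  have : w - u = w - v :=
    linColoring_injOn_triUnitBall hz hu hv (by rw [linColoring_sub, linColoring_sub, heq])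
  exact huv (sub_right_injective this)
end

section
/- An Isbell coloring of the triangular lattice is uniquely determined by its restriction to a hexagon together with one extra vertex. Precisely: let H⁺ = {(0,0), (1,0), (−1,0), (0,1), (0,−1), (1,−1), (−1,1), (2,0)} ⊆ ℤ × ℤ. If z₁, z₂ ∈ {3, 5} ⊆ ZMod 7 and π₁, π₂ are bijections of ZMod 7 such that π₁(ℓ_{z₁}(v)) = π₂(ℓ_{z₂}(v)) for all v ∈ H⁺, then z₁ = z₂ and π₁ = π₂; in particular the two colorings agree on all of ℤ × ℤ. -/
/-- `H⁺`: the origin, its six neighbours, and one further vertex at distance 2. -/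
def hexPlus : Set (ℤ × ℤ) :=
  {(0, 0), (1, 0), (-1, 0), (0, 1), (0, -1), (1, -1), (-1, 1), (2, 0)}

/-!
For `z ∈ {3, 5}` the map `ℓ_z` sends the seven hexagon vertices of `H⁺` bijectively onto
`ZMod 7`. The extra vertex `(2, 0)` has the same color as `(-1, 1)` under `π ∘ ℓ_z` exactly when
`z = 3`, so the coloring of `H⁺` determines `z`; it then determines `π` on every color.
-/

lemma linColoring_neg_one_one_eq_two_zero_iff (z : ZMod 7) :
    linColoring z (-1, 1) = linColoring z (2, 0) ↔ z = 3 := by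
  simp only [linColoring]
  push_cast
  revert z
  decide

lemma linColoring_surjOn_hexPlus {z : ZMod 7} (hz : z ∈ ({3, 5} : Set (ZMod 7))) :
    Set.SurjOn (linColoring z) hexPlus Set.univ := by
  intro x _
  simp only [Set.mem_image, hexPlus, Set.mem_insert_iff, Set.mem_singleton_iff,
    exists_eq_or_imp, exists_eq_left, linColoring]
  push_cast
  rcases hz with rfl | rfl <;> revert x <;> decide

/-- An Isbell coloring of the triangular lattice is uniquely determined by its restriction
to the hexagon together with one extra vertex: if two Isbell colorings agree on `H⁺`,
then their data coincide, and in particular they agree everywhere. -/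
theorem isbell_unique_of_agree_on_hexPlus
    (z₁ z₂ : ZMod 7) (hz₁ : z₁ ∈ ({3, 5} : Set (ZMod 7))) (hz₂ : z₂ ∈ ({3, 5} : Set (ZMod 7)))
    (π₁ π₂ : Equiv.Perm (ZMod 7))
    (hagree : ∀ v ∈ hexPlus, π₁ (linColoring z₁ v) = π₂ (linColoring z₂ v)) :
    z₁ = z₂ ∧ π₁ = π₂ ∧ ∀ v : ℤ × ℤ, π₁ (linColoring z₁ v) = π₂ (linColoring z₂ v) := by
  have hz : z₁ = z₂ := by
    have h3 : z₁ = 3 ↔ z₂ = 3 := by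
      rw [← linColoring_neg_one_one_eq_two_zero_iff, ← linColoring_neg_one_one_eq_two_zero_iff,
        ← π₁.injective.eq_iff, hagree _ (by simp [hexPlus]), hagree _ (by simp [hexPlus]),
        π₂.injective.eq_iff]
    rcases hz₁ with rfl | rfl <;> rcases hz₂ with rfl | rfl <;> simp_all
  subst hz
  have hπ : π₁ = π₂ := Equiv.coe_inj.mp <| (Set.eqOn_univ _ _).mp <|
    Set.EqOn.cancel_right (fun v hv => hagree v hv) (linColoring_surjOn_hexPlus hz₁)
  exact ⟨rfl, hπ, fun v => by rw [hπ]⟩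
end

section
/- A nice 7-coloring of the central hexagon of the triangular lattice extends to a nice 7-coloring of the whole lattice in exactly two ways. Precisely: let H = {(0,0), (1,0), (−1,0), (0,1), (0,−1), (1,−1), (−1,1)} and let h : H → Fin 7 be injective. Then the set of colorings c : ℤ × ℤ → Fin 7 that are nice (any two distinct vertices at graph distance at most 2 in T get different colors) and restrict to h on H has exactly two elements. -/
/-- `H`: the origin and its six neighbours (the central hexagon). -/
def hexagon : Set (ℤ × ℤ) :=
  {(0, 0), (1, 0), (-1, 0), (0, 1), (0, -1), (1, -1), (-1, 1)}

theorem Set.BijOn.exists_equiv_apply_eq {α β γ : Type*} {s : Set β} {f : β → α} {g : β → γ}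
    (hf : Set.BijOn f s Set.univ) (hg : Set.BijOn g s Set.univ) :
    ∃ σ : α ≃ γ, ∀ x ∈ s, σ (f x) = g x := by
  refine ⟨(Equiv.Set.univ α).symm.trans ((hf.equiv f).symm.trans
    ((hg.equiv g).trans (Equiv.Set.univ γ))), fun x hx => ?_⟩
  have : (hf.equiv f).symm ⟨f x, Set.mem_univ _⟩ = ⟨x, hx⟩ := (Equiv.symm_apply_eq _).2 rfl
  simp only [Equiv.trans_apply, Equiv.Set.univ_symm_apply, this]
  rfl

theorem linColoring_add (z : ZMod 7) (u v : ℤ × ℤ) :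
    linColoring z (u + v) = linColoring z u + linColoring z v := by
  simp only [linColoring, Prod.fst_add, Prod.snd_add, Int.cast_add]
  ring

open Pointwise

namespace TriLattice

def unitOffsets : Finset (ℤ × ℤ) := {(1, 0), (-1, 0), (0, 1), (0, -1), (1, -1), (-1, 1)}

def hexBall : ℕ → Finset (ℤ × ℤ)
  | 0 => {0}
  | n + 1 => hexBall n + insert 0 unitOffsets

def nearOffsets : Finset (ℤ × ℤ) := (hexBall 2).erase 0

theorem adj_iff {u v : ℤ × ℤ} : triLattice.Adj u v ↔ v - u ∈ unitOffsets := by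
  simp [triLattice, unitOffsets, Prod.ext_iff]

theorem adj_add {u e : ℤ × ℤ} (he : e ∈ unitOffsets) : triLattice.Adj u (u + e) :=
  adj_iff.2 (by simpa using he)

theorem reachable_add_zsmul {e : ℤ × ℤ} (he : e ∈ unitOffsets) (u : ℤ × ℤ) (n : ℤ) :
    triLattice.Reachable u (u + n • e) := by
  induction n using Int.induction_on with
  | zero => simp
  | succ n ih =>
    rw [add_smul, one_smul, ← add_assoc]
    exact ih.trans (adj_add he).reachable
  | pred n ih =>
    have hadj := adj_add he (u := u + (-n - 1 : ℤ) • e)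
    rw [add_assoc, ← add_one_zsmul, sub_add_cancel] at hadj
    exact ih.trans hadj.reachable.symm

theorem connected : triLattice.Connected := by
  refine triLattice.connected_iff_exists_forall_reachable.2 ⟨0, fun v => ?_⟩
  have h := (reachable_add_zsmul (by decide) 0 v.1 (e := (1, 0))).trans
    (reachable_add_zsmul (by decide) _ v.2 (e := (0, 1)))
  simpa using h

theorem sub_mem_hexBall_length {u v : ℤ × ℤ} (p : triLattice.Walk u v) :
    v - u ∈ hexBall p.length := by
  induction p with
  | nil => simp [hexBall]
  | cons huw p ih =>
    rw [SimpleGraph.Walk.length_cons, hexBall, add_comm]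
    simpa using Finset.add_mem_add (Finset.mem_insert_of_mem (adj_iff.1 huw)) ih

theorem hexBall_mono : Monotone hexBall :=
  monotone_nat_of_le_succ fun _ => Finset.subset_add_left _ (Finset.mem_insert_self 0 _)

theorem exists_walk_of_sub_mem_hexBall {u v : ℤ × ℤ} {n : ℕ} (h : v - u ∈ hexBall n) :
    ∃ p : triLattice.Walk u v, p.length ≤ n := by
  induction n generalizing v with
  | zero =>
    obtain rfl : v = u := by simpa [hexBall, sub_eq_zero] using h
    exact ⟨.nil, le_rfl⟩
  | succ n ih =>
    obtain ⟨a, ha, b, hb, hab⟩ := Finset.mem_add.1 h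
    obtain ⟨p, hp⟩ := ih (v := u + a) (by simpa using ha)
    rcases Finset.mem_insert.1 hb with rfl | hb
    · exact ⟨p.copy rfl (by rw [add_zero] at hab; rw [hab]; abel), by simp; omega⟩
    · refine ⟨p.concat (adj_iff.2 ?_), by simp; omega⟩
      rwa [sub_add_eq_sub_sub, ← eq_sub_of_add_eq' hab]

theorem dist_le_iff {u v : ℤ × ℤ} {n : ℕ} : triLattice.dist u v ≤ n ↔ v - u ∈ hexBall n := by
  constructor
  · intro h
    obtain ⟨p, hp⟩ := connected.exists_walk_length_eq_dist u v
    exact hexBall_mono (hp ▸ h) (sub_mem_hexBall_length p)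
  · intro h
    obtain ⟨p, hp⟩ := exists_walk_of_sub_mem_hexBall h
    exact (SimpleGraph.dist_le p).trans hp

theorem ne_and_dist_le_two_iff {u v : ℤ × ℤ} :
    u ≠ v ∧ triLattice.dist u v ≤ 2 ↔ v - u ∈ nearOffsets := by
  rw [nearOffsets, Finset.mem_erase, sub_ne_zero, dist_le_iff, ne_comm]

theorem coe_hexBall_one : (hexBall 1 : Set (ℤ × ℤ)) = hexagon := by
  rw [show hexBall 1 = {(0, 0), (1, 0), (-1, 0), (0, 1), (0, -1), (1, -1), (-1, 1)} by decide]
  simp [hexagon]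

theorem bijOn_univ_of_injOn_hexagon {α : Type*} [Fintype α] {f : ℤ × ℤ → α}
    (hα : Fintype.card α = 7) (hf : Set.InjOn f hexagon) : Set.BijOn f hexagon Set.univ := by
  classical
  rw [← coe_hexBall_one] at hf ⊢
  refine ⟨Set.mapsTo_univ _ _, hf, fun x _ => ?_⟩
  have himage : (hexBall 1).image f = Finset.univ :=
    Finset.eq_univ_of_card _ (by rw [Finset.card_image_of_injOn hf, hα]; rfl)
  rw [← Finset.coe_image, himage, Finset.coe_univ]
  trivial

variable {α : Type*} {c : ℤ × ℤ → α} {z : ZMod 7}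

def IsNice (c : ℤ × ℤ → α) : Prop :=
  ∀ u v, u ≠ v → triLattice.dist u v ≤ 2 → c u ≠ c v

theorem isNice_iff : IsNice c ↔ ∀ u, ∀ δ ∈ nearOffsets, c (u + δ) ≠ c u := by
  refine ⟨fun hc u δ hδ => ?_, fun hc u v huv hd => ?_⟩
  · have h := ne_and_dist_le_two_iff.2 (by simpa using hδ : u + δ - u ∈ nearOffsets)
    exact (hc _ _ h.1 h.2).symm
  · simpa using (hc u (v - u) (ne_and_dist_le_two_iff.1 ⟨huv, hd⟩)).symm

theorem IsNice.comp {β : Type*} {f : α → β} (hc : IsNice c) (hf : Function.Injective f) :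
    IsNice (f ∘ c) :=
  fun u v huv hd => hf.ne (hc u v huv hd)

theorem isNice_linColoring (hz : z = 3 ∨ z = 5) : IsNice (linColoring z) := by
  have hδ : ∀ δ ∈ nearOffsets, linColoring z δ ≠ 0 := by rcases hz with rfl | rfl <;> decide
  exact isNice_iff.2 fun u δ hδn => by simpa [linColoring_add] using hδ δ hδn

theorem IsNice.injOn_hexagon (hc : IsNice c) : Set.InjOn c hexagon := by
  have hsub : ∀ a ∈ hexBall 1, ∀ b ∈ hexBall 1, b - a ∈ hexBall 2 := by decide
  rw [← coe_hexBall_one]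
  intro a ha b hb hab
  by_contra hne
  exact hc a b hne (dist_le_iff.2 (hsub a ha b hb)) hab

theorem bijOn_linColoring_hexagon (hz : z = 3 ∨ z = 5) :
    Set.BijOn (linColoring z) hexagon Set.univ :=
  bijOn_univ_of_injOn_hexagon (ZMod.card 7) (isNice_linColoring hz).injOn_hexagon

theorem IsNice.apply_two_neg_one {c : ℤ × ℤ → Fin 7} (hc : IsNice c) :
    c (2, -1) = c (-1, 0) ∨ c (2, -1) = c (-1, 1) := by
  obtain ⟨w, hw, hcw⟩ :=
    (bijOn_univ_of_injOn_hexagon (Fintype.card_fin 7) hc.injOn_hexagon).surjOn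
      (Set.mem_univ (c (2, -1)))
  have hnear : ∀ w ∈ hexBall 1, w ≠ (-1, 0) → w ≠ (-1, 1) → (2, -1) - w ∈ nearOffsets := by
    decide
  rw [← coe_hexBall_one] at hw
  by_contra! hne
  have h := ne_and_dist_le_two_iff.2 (hnear w hw (by rintro rfl; exact hne.1 hcw.symm)
    (by rintro rfl; exact hne.2 hcw.symm))
  exact hc w _ h.1 h.2 hcw

/-- A nice colouring that agrees with a relabelling of `linColoring z` on `K` has no colour left
for `q` other than the one of `linColoring z q`. -/
def Forced (z : ZMod 7) (K : Finset (ℤ × ℤ)) (q : ℤ × ℤ) : Prop :=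
  ∀ t ≠ linColoring z q, ∃ δ ∈ nearOffsets, q + δ ∈ K ∧ linColoring z (q + δ) = t

instance (z : ZMod 7) (K : Finset (ℤ × ℤ)) : DecidablePred (Forced z K) :=
  fun _ => by unfold Forced; infer_instance

def forcingStep (z : ZMod 7) (T K : Finset (ℤ × ℤ)) : Finset (ℤ × ℤ) :=
  K ∪ T.filter (Forced z K)

def seed : Finset (ℤ × ℤ) := insert (2, -1) (hexBall 1)

theorem hexBall_three_subset_forcingStep_iterate (hz : z = 3 ∨ z = 5) :
    hexBall 3 ⊆ (forcingStep z (hexBall 3))^[8] seed := by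
  rcases hz with rfl | rfl <;> decide +kernel

theorem IsNice.apply_add_eq_of_forced (σ : ZMod 7 ≃ α) (hc : IsNice c) {K : Finset (ℤ × ℤ)}
    {q : ℤ × ℤ} (hq : Forced z K q) (p : ℤ × ℤ)
    (hK : ∀ k ∈ K, c (p + k) = σ (linColoring z (p + k))) :
    c (p + q) = σ (linColoring z (p + q)) := by
  by_contra hne
  obtain ⟨δ, hδ, hqδ, hδt⟩ := hq (σ.symm (c (p + q)) - linColoring z p) fun ht => hne <| by
    rw [linColoring_add, ← ht, add_sub_cancel, Equiv.apply_symm_apply]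
  refine isNice_iff.1 hc (p + q) δ hδ ?_
  rw [add_assoc, hK _ hqδ, linColoring_add, hδt, add_sub_cancel, Equiv.apply_symm_apply]

theorem IsNice.apply_add_eq_of_mem_iterate (σ : ZMod 7 ≃ α) (hc : IsNice c)
    {T K : Finset (ℤ × ℤ)} (p : ℤ × ℤ)
    (hK : ∀ k ∈ K, c (p + k) = σ (linColoring z (p + k))) (n : ℕ) :
    ∀ k ∈ (forcingStep z T)^[n] K, c (p + k) = σ (linColoring z (p + k)) := by
  induction n generalizing K with
  | zero => exact hK
  | succ n ih =>
    refine ih fun k hk => ?_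
    rcases Finset.mem_union.1 hk with hk | hk
    · exact hK k hk
    · exact hc.apply_add_eq_of_forced σ (Finset.mem_filter.1 hk).2 p hK

theorem IsNice.eq_comp_linColoring (hz : z = 3 ∨ z = 5) (σ : ZMod 7 ≃ α) (hc : IsNice c)
    (hhex : ∀ v ∈ hexagon, c v = σ (linColoring z v))
    (hfar : c (2, -1) = σ (linColoring z (2, -1))) :
    c = σ ∘ linColoring z := by
  let P : ℤ × ℤ → Prop := fun p => ∀ k ∈ seed, c (p + k) = σ (linColoring z (p + k))
  have hP0 : P 0 := by
    intro k hk
    rcases Finset.mem_insert.1 hk with rfl | hk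
    · simpa using hfar
    · simpa using hhex k (coe_hexBall_one ▸ hk)
  have hstep : ∀ p q, triLattice.Adj p q → P p → P q := by
    have hseed : seed ⊆ hexBall 2 := by decide
    intro p q hpq hp k hk
    have hnear : q - p + k ∈ hexBall 3 := add_comm k (q - p) ▸
      Finset.add_mem_add (hseed hk) (Finset.mem_insert_of_mem (adj_iff.1 hpq))
    have h := hc.apply_add_eq_of_mem_iterate σ p hp 8 _
      (hexBall_three_subset_forcingStep_iterate hz hnear)
    rwa [← add_assoc, add_sub_cancel] at h
  funext p
  have hp : P p := by
    induction (SimpleGraph.reachable_iff_reflTransGen 0 p).1 (connected.preconnected 0 p) with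
    | refl => exact hP0
    | tail _ hadj ih => exact hstep _ _ hadj ih
  simpa using hp 0 (by decide)

end TriLattice

/-- A nice 7-coloring of the central hexagon of the triangular lattice extends to a nice
7-coloring of the whole lattice in exactly two ways. -/
theorem nice_extension_of_hexagon_coloring (h : ℤ × ℤ → Fin 7)
    (hinj : Set.InjOn h hexagon) :
    ∃ c₁ c₂ : ℤ × ℤ → Fin 7, c₁ ≠ c₂ ∧
      {c : ℤ × ℤ → Fin 7 |
        (∀ u v : ℤ × ℤ, u ≠ v → triLattice.dist u v ≤ 2 → c u ≠ c v) ∧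
        ∀ v ∈ hexagon, c v = h v} = {c₁, c₂} := by
  have hh := TriLattice.bijOn_univ_of_injOn_hexagon (Fintype.card_fin 7) hinj
  obtain ⟨σ₃, hσ₃⟩ := (TriLattice.bijOn_linColoring_hexagon (.inl rfl)).exists_equiv_apply_eq hh
  obtain ⟨σ₅, hσ₅⟩ := (TriLattice.bijOn_linColoring_hexagon (.inr rfl)).exists_equiv_apply_eq hh
  have hmem₃ : ((-1, 0) : ℤ × ℤ) ∈ hexagon := by simp [hexagon]
  have hmem₅ : ((-1, 1) : ℤ × ℤ) ∈ hexagon := by simp [hexagon]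
  have hfar₃ : linColoring 3 (2, -1) = linColoring 3 (-1, 0) := by decide
  have hfar₅ : linColoring 5 (2, -1) = linColoring 5 (-1, 1) := by decide
  refine ⟨σ₃ ∘ linColoring 3, σ₅ ∘ linColoring 5, fun h35 => ?_, Set.ext fun c => ⟨?_, ?_⟩⟩
  · have h2 := congr_fun h35 (2, -1)
    simp only [Function.comp_apply, hfar₃, hfar₅, hσ₃ _ hmem₃,
      hσ₅ _ hmem₅] at h2
    exact absurd (hinj hmem₃ hmem₅ h2) (by decide)
  · rintro ⟨hc : TriLattice.IsNice c, hch⟩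
    rcases hc.apply_two_neg_one with h2 | h2
    · refine .inl (hc.eq_comp_linColoring (.inl rfl) σ₃ (fun v hv => ?_) ?_)
      · rw [hch v hv, hσ₃ v hv]
      · rw [h2, hfar₃, hch _ hmem₃, hσ₃ _ hmem₃]
    · refine .inr (hc.eq_comp_linColoring (.inr rfl) σ₅ (fun v hv => ?_) ?_)
      · rw [hch v hv, hσ₅ v hv]
      · rw [h2, hfar₅, hch _ hmem₅, hσ₅ _ hmem₅]
  · rintro (rfl | rfl)
    · exact ⟨(TriLattice.isNice_linColoring (.inl rfl)).comp σ₃.injective, hσ₃⟩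
    · exact ⟨(TriLattice.isNice_linColoring (.inr rfl)).comp σ₅.injective, hσ₅⟩
end

section
/- Let T be a finite tree (a finite connected acyclic simple graph) with at most 33 edges in which every vertex has degree at most 6. Then there exist two subtrees T₁ and T₂ of T (connected subgraphs, hence trees) such that their edge sets are disjoint and together contain every edge of T, their vertex sets intersect in exactly one vertex, and each of T₁ and T₂ has at most 22 edges. -/
/-!
Let the tree have `n` vertices and `m = n - 1` edges. Split it at a hub `v` along a vertex set
`A ∋ v` into the subtrees induced by `A` and by `{v} ∪ Aᶜ`. No edge joins `A \ {v}` to `Aᶜ` (it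
would close a cycle through `v`), so their edge sets partition the edges, and being trees they have
`|A| - 1` and `n - |A|` edges.

For a target bound `e` with `2 m ≤ 3 e`, start from `A = V`. While `|A| > e + 1`, take a
neighbour `u` of `v` in `A` and the branch `C` of `A \ {v}` through `u`; both `A \ C` (hub `v`)
and `C` (hub `u`) are again admissible, both are smaller than `A`, and one of them keeps at least
half of `A`. Unless `A = V` throughout, the process stops with `e + 2 ≤ 2 |A| ≤ 2e + 2`, and
then `2 m ≤ 3 e` gives `n - |A| ≤ e` as well.
-/

namespace SimpleGraph

variable {V : Type*} {G : SimpleGraph V}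

def ReachableIn (G : SimpleGraph V) (S : Set V) (x y : V) : Prop :=
  ∃ p : G.Walk x y, ∀ z ∈ p.support, z ∈ S

namespace ReachableIn

variable {S T : Set V} {x y z v : V}

lemma refl (hx : x ∈ S) : G.ReachableIn S x x := ⟨.nil, by simpa using hx⟩

lemma symm : G.ReachableIn S x y → G.ReachableIn S y x
  | ⟨p, hp⟩ => ⟨p.reverse, by simpa using hp⟩

lemma trans : G.ReachableIn S x y → G.ReachableIn S y z → G.ReachableIn S x z
  | ⟨p, hp⟩, ⟨q, hq⟩ => ⟨p.append q, by simp only [Walk.mem_support_append_iff]; grind⟩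

lemma mono (hST : S ⊆ T) : G.ReachableIn S x y → G.ReachableIn T x y
  | ⟨p, hp⟩ => ⟨p, fun w hw => hST (hp w hw)⟩

lemma of_adj (h : G.Adj x y) (hx : x ∈ S) (hy : y ∈ S) : G.ReachableIn S x y :=
  ⟨h.toWalk, by simp [hx, hy]⟩

lemma mem_right : G.ReachableIn S x y → y ∈ S
  | ⟨p, hp⟩ => hp y p.end_mem_support

lemma exists_adj (h : G.ReachableIn S x y) (hxy : x ≠ y) : ∃ u ∈ S, G.Adj x u := by
  obtain ⟨p, hp⟩ := h
  cases p with
  | nil => exact absurd rfl hxy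
  | cons h _ => exact ⟨_, hp _ (by simp), h⟩

lemma sdiff_of_adj_closed {C : Set V} (hC : ∀ y ∈ C, ∀ z ∈ S, z ≠ v → G.Adj y z → z ∈ C)
    (hx : x ∉ C) (h : G.ReachableIn S x v) : G.ReachableIn (S \ C) x v := by
  obtain ⟨p, hp⟩ := h
  induction p with
  | nil => exact refl ⟨hp _ (by simp), hx⟩
  | @cons x b v hxb p ih =>
    have hxS : x ∈ S := hp x (by simp)
    by_cases hxv : x = v
    · exact hxv ▸ refl ⟨hxS, hx⟩
    · have hb : b ∉ C := fun hb => hx (hC b hb x hxS hxv hxb.symm)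
      exact (of_adj (S := S \ C) hxb ⟨hxS, hx⟩ ⟨hp b (by simp), hb⟩).trans
        (ih hC hb fun z hz => hp z (by simp [hz]))

end ReachableIn

lemma connected_induce_top_of_forall_reachableIn {S : Set V} {v : V} (hv : v ∈ S)
    (h : ∀ x ∈ S, G.ReachableIn S v x) : ((⊤ : G.Subgraph).induce S).Connected := by
  rw [← connected_induce_iff]
  refine G.induce_connected_of_patches v hv fun hx => ?_
  obtain ⟨p, hp⟩ := h _ hx
  exact ⟨_, hp, p.start_mem_support, p.end_mem_support,
    p.connected_induce_support.preconnected _ _⟩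

lemma IsAcyclic.ncard_edgeSet_add_one [Finite V] (hG : G.IsAcyclic) {H : G.Subgraph}
    (hH : H.Connected) : H.edgeSet.ncard + 1 = H.verts.ncard := by
  rw [← H.image_coe_edgeSet_coe,
    Set.ncard_image_of_injective _ (Sym2.map.injective Subtype.coe_injective),
    ← Nat.card_coe_set_eq, ← Nat.card_coe_set_eq]
  exact (isTree_iff_connected_and_card.mp ⟨hH, hG.subgraph H⟩).2

def branch (G : SimpleGraph V) (A : Set V) (v u : V) : Set V :=
  {x | G.ReachableIn (A \ {v}) u x}

section branch

variable {A : Set V} {v u : V}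

lemma branch_subset : G.branch A v u ⊆ A \ {v} := fun _ hx => ReachableIn.mem_right hx

lemma notMem_branch : v ∉ G.branch A v u := fun h => (branch_subset h).2 rfl

lemma self_mem_branch (hu : u ∈ A) (huv : u ≠ v) : u ∈ G.branch A v u :=
  ReachableIn.refl ⟨hu, huv⟩

lemma mem_branch_of_adj {x y : V} (hx : x ∈ G.branch A v u) (hy : y ∈ A) (hyv : y ≠ v)
    (hxy : G.Adj x y) : y ∈ G.branch A v u :=
  ReachableIn.trans hx (.of_adj hxy (branch_subset hx) ⟨hy, hyv⟩)

lemma reachableIn_branch {x : V} (hx : x ∈ G.branch A v u) :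
    G.ReachableIn (G.branch A v u) u x := by
  classical
  obtain ⟨p, hp⟩ := hx
  exact ⟨p, fun z hz =>
    ⟨p.takeUntil z hz, fun w hw => hp w (p.support_takeUntil_subset_support hz hw)⟩⟩

end branch

structure HubSplit (G : SimpleGraph V) where
  hub : V
  part : Set V
  hub_mem : hub ∈ part
  reachableIn_part : ∀ x ∈ part, G.ReachableIn part hub x
  reachableIn_compl : ∀ x ∈ insert hub partᶜ, G.ReachableIn (insert hub partᶜ) hub x

namespace HubSplit

def ofConnected (hG : G.Connected) (v : V) : HubSplit G where
  hub := v
  part := Set.univ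
  hub_mem := trivial
  reachableIn_part x _ := (hG.preconnected v x).elim fun p => ⟨p, fun _ _ => trivial⟩
  reachableIn_compl x hx := by
    rw [Set.compl_univ, insert_empty_eq, Set.mem_singleton_iff] at hx
    exact hx ▸ .refl (Set.mem_insert _ _)

variable (c : HubSplit G) {u : V}

def removeBranch (hu : u ∈ c.part) (hadj : G.Adj c.hub u) : HubSplit G where
  hub := c.hub
  part := c.part \ G.branch c.part c.hub u
  hub_mem := ⟨c.hub_mem, notMem_branch⟩
  reachableIn_part x hx :=
    ((c.reachableIn_part x hx.1).symm.sdiff_of_adj_closed (fun _ hy _ => mem_branch_of_adj hy)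
      hx.2).symm
  reachableIn_compl x hx := by
    by_cases hxC : x ∈ G.branch c.part c.hub u
    · refine (ReachableIn.of_adj hadj (Set.mem_insert _ _)
        (Or.inr fun h => h.2 (self_mem_branch hu hadj.ne'))).trans
        ((reachableIn_branch hxC).mono fun y hy => Or.inr fun h => h.2 hy)
    · exact (c.reachableIn_compl x (by grind)).mono (by grind)

def toBranch (hu : u ∈ c.part) (hadj : G.Adj c.hub u) : HubSplit G where
  hub := u
  part := G.branch c.part c.hub u
  hub_mem := self_mem_branch hu hadj.ne'
  reachableIn_part _ := reachableIn_branch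
  reachableIn_compl x hx := by
    obtain rfl | hxC := hx
    · exact .refl (Set.mem_insert _ _)
    refine (ReachableIn.of_adj hadj.symm (Set.mem_insert _ _)
      (Or.inr notMem_branch)).trans ?_
    by_cases hxA : x ∈ c.part
    · exact ((c.removeBranch hu hadj).reachableIn_part x ⟨hxA, hxC⟩).mono
        fun y hy => Or.inr hy.2
    · refine (c.reachableIn_compl x (Or.inr hxA)).mono ?_
      rintro y (rfl | hy)
      · exact Or.inr notMem_branch
      · exact Or.inr fun h => hy (branch_subset h).1

lemma exists_ncard_part_lt [Finite V] (hc : 1 < c.part.ncard) :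
    ∃ c' : HubSplit G, c'.part.ncard < c.part.ncard ∧ c.part.ncard ≤ 2 * c'.part.ncard := by
  obtain ⟨x, hx, hxv⟩ := Set.exists_ne_of_one_lt_ncard hc c.hub
  obtain ⟨u, hu, hadj⟩ := (c.reachableIn_part x hx).exists_adj hxv.symm
  have hssub : G.branch c.part c.hub u ⊂ c.part :=
    (Set.ssubset_iff_of_subset fun _ hy => (branch_subset hy).1).mpr
      ⟨c.hub, c.hub_mem, notMem_branch⟩
  have hlt := Set.ncard_lt_ncard hssub
  have hpos : 0 < (G.branch c.part c.hub u).ncard :=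
    (Set.ncard_pos).mpr ⟨u, self_mem_branch hu hadj.ne'⟩
  by_cases h : c.part.ncard ≤ 2 * (G.branch c.part c.hub u).ncard
  · exact ⟨c.toBranch hu hadj, hlt, h⟩
  · have := Set.ncard_sdiff hssub.subset
    exact ⟨c.removeBranch hu hadj, by simp only [removeBranch]; omega,
      by simp only [removeBranch]; omega⟩

lemma exists_ncard_part_le [Finite V] (c : HubSplit G) (e : ℕ)
    (hc : e + 2 ≤ 2 * c.part.ncard) :
    ∃ c' : HubSplit G, e + 2 ≤ 2 * c'.part.ncard ∧ c'.part.ncard ≤ e + 1 := by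
  by_cases he : c.part.ncard ≤ e + 1
  · exact ⟨c, hc, he⟩
  obtain ⟨c', hlt, hle⟩ := c.exists_ncard_part_lt (by omega)
  exact c'.exists_ncard_part_le e (by omega)
termination_by c.part.ncard

def fst : G.Subgraph := (⊤ : G.Subgraph).induce c.part

def snd : G.Subgraph := (⊤ : G.Subgraph).induce (insert c.hub c.partᶜ)

lemma fst_connected : c.fst.Connected :=
  connected_induce_top_of_forall_reachableIn c.hub_mem c.reachableIn_part

lemma snd_connected : c.snd.Connected :=
  connected_induce_top_of_forall_reachableIn (Set.mem_insert _ _) c.reachableIn_compl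

lemma fst_verts_inter_snd_verts : c.fst.verts ∩ c.snd.verts = {c.hub} := by
  ext x
  simp only [fst, snd, Subgraph.induce_verts]
  grind [c.hub_mem]

lemma disjoint_edgeSet : Disjoint c.fst.edgeSet c.snd.edgeSet := by
  rw [Set.disjoint_left]
  rintro e he₁ he₂
  induction e using Sym2.ind with
  | _ x y =>
    have hx : x ∈ c.fst.verts ∩ c.snd.verts := ⟨c.fst.edge_vert he₁, c.snd.edge_vert he₂⟩
    have hy : y ∈ c.fst.verts ∩ c.snd.verts :=
      ⟨c.fst.edge_vert (Sym2.eq_swap ▸ he₁), c.snd.edge_vert (Sym2.eq_swap ▸ he₂)⟩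
    rw [fst_verts_inter_snd_verts] at hx hy
    exact (c.fst.adj_sub he₁).ne (hx.trans hy.symm)

lemma not_adj_of_ne_hub (hG : G.IsAcyclic) {x y : V} (hx : x ∈ c.part) (hxv : x ≠ c.hub)
    (hy : y ∉ c.part) : ¬G.Adj x y := by
  intro hxy
  obtain ⟨p, hp⟩ := (c.reachableIn_part x hx).symm
  obtain ⟨q, hq⟩ := c.reachableIn_compl y (Or.inr hy)
  have := isBridge_iff_forall_walk_mem_edges.mp (isAcyclic_iff_forall_adj_isBridge.mp hG hxy)
    (p.append q)
  rcases List.mem_append.mp (p.edges_append q ▸ this) with h | h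
  · exact hy (hp y (p.snd_mem_support_of_mem_edges h))
  · exact (hq x (q.fst_mem_support_of_mem_edges h)).elim hxv fun h => h hx

lemma edgeSet_union (hG : G.IsAcyclic) : c.fst.edgeSet ∪ c.snd.edgeSet = G.edgeSet := by
  ext e
  induction e using Sym2.ind with
  | _ x y =>
    simp only [fst, snd, Set.mem_union, Subgraph.mem_edgeSet, Subgraph.induce_adj,
      Subgraph.top_adj, mem_edgeSet]
    have hxy := c.not_adj_of_ne_hub hG (x := x) (y := y)
    have hyx := c.not_adj_of_ne_hub hG (x := y) (y := x)
    grind [G.adj_symm]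

end HubSplit

theorem IsTree.exists_subgraphs_split [Finite V] (hG : G.IsTree) {e : ℕ}
    (he : 2 * G.edgeSet.ncard ≤ 3 * e) :
    ∃ T₁ T₂ : G.Subgraph,
      T₁.Connected ∧ T₂.Connected ∧
      Disjoint T₁.edgeSet T₂.edgeSet ∧
      T₁.edgeSet ∪ T₂.edgeSet = G.edgeSet ∧
      (∃ v : V, T₁.verts ∩ T₂.verts = {v}) ∧
      T₁.edgeSet.ncard ≤ e ∧ T₂.edgeSet.ncard ≤ e := by
  obtain ⟨v⟩ := hG.connected.nonempty
  have hn : G.edgeSet.ncard + 1 = Nat.card V := (isTree_iff_connected_and_card.mp hG).2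
  obtain ⟨c, hc⟩ : ∃ c : HubSplit G, c.part.ncard ≤ e + 1 ∧
      (e + 2 ≤ 2 * c.part.ncard ∨ c.part.ncard = Nat.card V) := by
    let c₀ := HubSplit.ofConnected hG.connected v
    have : c₀.part.ncard = Nat.card V := Set.ncard_univ V
    by_cases h : Nat.card V ≤ e + 1
    · exact ⟨c₀, by omega, Or.inr this⟩
    · obtain ⟨c, hc⟩ := c₀.exists_ncard_part_le e (by omega)
      exact ⟨c, hc.2, Or.inl hc.1⟩
  have h₁ : c.fst.edgeSet.ncard + 1 = c.part.ncard :=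
    hG.isAcyclic.ncard_edgeSet_add_one c.fst_connected
  have h₂ : c.snd.edgeSet.ncard + 1 = c.partᶜ.ncard + 1 := by
    rw [hG.isAcyclic.ncard_edgeSet_add_one c.snd_connected]
    exact Set.ncard_insert_of_notMem (Set.notMem_compl_iff.mpr c.hub_mem)
  have hcompl := Set.ncard_add_ncard_compl c.part
  exact ⟨c.fst, c.snd, c.fst_connected, c.snd_connected, c.disjoint_edgeSet,
    c.edgeSet_union hG.isAcyclic, ⟨c.hub, c.fst_verts_inter_snd_verts⟩, by omega, by omega⟩

end SimpleGraph

theorem tree_splits_into_two_subtrees_general {V : Type*} [Fintype V]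
    (G : SimpleGraph V) [DecidableRel G.Adj]
    (hconn : G.Connected) (hacyc : G.IsAcyclic)
    (hedges : G.edgeFinset.card ≤ 33) :
    ∃ T₁ T₂ : G.Subgraph,
      T₁.Connected ∧ T₂.Connected ∧
      Disjoint T₁.edgeSet T₂.edgeSet ∧
      T₁.edgeSet ∪ T₂.edgeSet = G.edgeSet ∧
      (∃ v : V, T₁.verts ∩ T₂.verts = {v}) ∧
      T₁.edgeSet.ncard ≤ 22 ∧ T₂.edgeSet.ncard ≤ 22 :=
  SimpleGraph.IsTree.exists_subgraphs_split ⟨hconn, hacyc⟩ <| by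
    rw [← G.coe_edgeFinset, Set.ncard_coe_finset]
    omega

/-- A finite tree with at most 33 edges and maximum degree at most 6 can be split into
two subtrees whose edge sets partition the edge set of the tree, whose vertex sets meet
in exactly one vertex, and each of which has at most 22 edges. -/
theorem tree_splits_into_two_subtrees {V : Type*} [Fintype V]
    (G : SimpleGraph V) [DecidableRel G.Adj]
    (hconn : G.Connected) (hacyc : G.IsAcyclic)
    (hedges : G.edgeFinset.card ≤ 33)
    (hdeg : ∀ v : V, G.degree v ≤ 6) :
    ∃ T₁ T₂ : G.Subgraph,
      T₁.Connected ∧ T₂.Connected ∧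
      Disjoint T₁.edgeSet T₂.edgeSet ∧
      T₁.edgeSet ∪ T₂.edgeSet = G.edgeSet ∧
      (∃ v : V, T₁.verts ∩ T₂.verts = {v}) ∧
      T₁.edgeSet.ncard ≤ 22 ∧ T₂.edgeSet.ncard ≤ 22 :=
  tree_splits_into_two_subtrees_general G hconn hacyc hedges
end
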